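/- Let x, y ∈ ℝⁿ, ρ > 0, s > 0, and suppose ρx + y ≠ 0. Then z* = √s (ρx + y)/‖ρx + y‖₂ is a global minimizer of z ↦ (ρ/2)‖x − z‖₂² + ⟨y, x − z⟩ over the sphere {z ∈ ℝⁿ : ‖z‖₂² = s}. -/
import Mathlib


/-- Euclidean inner product `⟨u, v⟩ = ∑ᵢ uᵢ vᵢ` on `ℝⁿ`. -/
noncomputable def ip {n : ℕ} (u v : Fin n → ℝ) : ℝ := ∑ i, u i * v i

/-- closed-form z₂-update: for `ρ > 0`, `s > 0` and
`ρx + y ≠ 0`, the point `z* = √s (ρx + y)/‖ρx + y‖₂` is a global minimizer of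
`z ↦ (ρ/2)‖x − z‖₂² + ⟨y, x − z⟩` over the sphere `{z : ‖z‖₂² = s}`. -/
theorem z2_update_closed_form (n : ℕ) (x y : Fin n → ℝ) (ρ s : ℝ)
    (hρ : 0 < ρ) (hs : 0 < s) (hne : ρ • x + y ≠ 0)
    (zstar : Fin n → ℝ)
    (hz : zstar =
      (Real.sqrt s / Real.sqrt (∑ i, ((ρ • x + y) i) ^ 2)) • (ρ • x + y)) :
    (∑ i, (zstar i) ^ 2 = s) ∧
    (∀ z : Fin n → ℝ, ∑ i, (z i) ^ 2 = s →
      (ρ / 2) * ∑ i, (x i - zstar i) ^ 2 + ip y (x - zstar) ≤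
        (ρ / 2) * ∑ i, (x i - z i) ^ 2 + ip y (x - z)) := by
  set w : Fin n → ℝ := ρ • x + y with hw
  -- positivity of ∑ w i ^ 2
  have hwsum : 0 < ∑ i, (w i) ^ 2 := by
    obtain ⟨i, hi⟩ := Function.ne_iff.mp hne
    exact Finset.sum_pos' (fun j _ => sq_nonneg _)
      ⟨i, Finset.mem_univ i, sq_pos_iff.mpr hi⟩
  set N : ℝ := Real.sqrt (∑ i, (w i) ^ 2) with hN
  have hNpos : 0 < N := Real.sqrt_pos.mpr hwsum
  have hN2 : N ^ 2 = ∑ i, (w i) ^ 2 := Real.sq_sqrt hwsum.le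
  have hsphere : ∑ i, (zstar i) ^ 2 = s := by
    subst hz
    simp only [Pi.smul_apply, smul_eq_mul, mul_pow, ← Finset.mul_sum]
    rw [← hN2, div_pow, Real.sq_sqrt hs.le]
    field_simp
  refine ⟨hsphere, fun z hzs => ?_⟩
  -- expansion of the objective
  have expand : ∀ v : Fin n → ℝ,
      (ρ / 2) * ∑ i, (x i - v i) ^ 2 + ip y (x - v)
        = (∑ i, ((ρ / 2) * (x i) ^ 2 + y i * x i))
          + (ρ / 2) * (∑ i, (v i) ^ 2) - ∑ i, w i * v i := by
    intro v
    simp only [ip, Pi.sub_apply, hw, Pi.add_apply, Pi.smul_apply, smul_eq_mul,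
      Finset.mul_sum, ← Finset.sum_add_distrib, ← Finset.sum_sub_distrib]
    exact Finset.sum_congr rfl fun i _ => by ring
  rw [expand zstar, expand z, hsphere, hzs]
  have hz_le : ∑ i, w i * z i ≤ N * Real.sqrt s := by
    have := Real.sum_mul_le_sqrt_mul_sqrt Finset.univ w z
    rwa [hzs, ← hN] at this
  have hzstar_eq : ∑ i, w i * zstar i = N * Real.sqrt s := by
    subst hz
    simp only [Pi.smul_apply, smul_eq_mul, ← hw, ← hN]
    have : ∀ i, w i * (Real.sqrt s / N * w i) = (Real.sqrt s / N) * (w i) ^ 2 := by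
      intro i; ring
    simp only [this, ← Finset.mul_sum, ← hN2]
    field_simp
  rw [hzstar_eq]
  linarith
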